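/- arXiv:math/0603078 — 6 statements merged into one kernel-verified Lean document; each statement's English description precedes it below -/
import Mathlib

section
/- Let θ̂ : S × Ω → ℝ^ℓ be measurable and t ∈ ℝ^ℓ. The function (s, ω) ↦ F(t, ω) = Σ_{s' ∈ S} p(s', ω)·1{θ̂(s', ω) ≤ t} is a version of the conditional probability P_{d,m}({(s, ω) : θ̂(s, ω) ≤ t} | 𝒢), where 𝒢 = {S × F : F ∈ 𝓕} is the sub-σ-algebra of the product generated by the Ω-coordinate; that is, the design-based distribution function of a sample estimator is a conditional distribution function in the product space given the model information. -/
open MeasureTheory Filter Topology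

/-- For measurable `θ̂ : S × Ω → ℝ^ℓ` and `t ∈ ℝ^ℓ`, the function
`(s, ω) ↦ F(t, ω) = Σ_{s'} p(s', ω)·1{θ̂(s', ω) ≤ t}` is a version of the conditional
probability `P_{d,m}({θ̂ ≤ t} | 𝒢)` given the sub-σ-algebra `𝒢` generated by the
`Ω`-coordinate: it is `𝒢`-measurable and integrates correctly over every `𝒢`-set `S × F`. -/
theorem statement6
    {Ω : Type*} [mΩ : MeasurableSpace Ω] (P : Measure Ω) [IsProbabilityMeasure P]
    (S : Type*) [Countable S] [Nonempty S]
    [MeasurableSpace S] [MeasurableSingletonClass S]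
    (p : S → Ω → ℝ)
    (hp_meas : ∀ s, Measurable (p s))
    (hp_nonneg : ∀ s ω, 0 ≤ p s ω)
    (hp_sum : ∀ ω, ∑' s, p s ω = 1)
    (Pdm : Measure (S × Ω)) [IsProbabilityMeasure Pdm]
    (hPdm : ∀ (s : S) (F : Set Ω), MeasurableSet F →
      Pdm ({s} ×ˢ F) = ∫⁻ ω in F, ENNReal.ofReal (p s ω) ∂P)
    {ℓ : ℕ} (that : S × Ω → (Fin ℓ → ℝ)) (hthat : Measurable that) (t : Fin ℓ → ℝ) :
    Measurable[MeasurableSpace.comap (Prod.snd : S × Ω → Ω) mΩ]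
        (fun x : S × Ω =>
          ∑' s', p s' x.2 * Set.indicator {y : S × Ω | that y ≤ t} 1 (s', x.2)) ∧
    ∀ F : Set Ω, MeasurableSet F →
      ∫⁻ x in Set.univ ×ˢ F,
          ENNReal.ofReal
            (∑' s', p s' x.2 * Set.indicator {y : S × Ω | that y ≤ t} 1 (s', x.2)) ∂Pdm
        = Pdm ({x : S × Ω | that x ≤ t} ∩ Set.univ ×ˢ F) := by
  classical
  set A : Set (S × Ω) := {y : S × Ω | that y ≤ t} with hA_def
  have hA : MeasurableSet A := by
    have : A = ⋂ i, {y : S × Ω | that y i ≤ t i} := by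
      ext y; simp [hA_def, Pi.le_def, Set.mem_iInter]
    rw [this]
    exact MeasurableSet.iInter fun i =>
      measurableSet_le ((measurable_pi_apply i).comp hthat) measurable_const
  -- summability
  have hsum : ∀ ω, Summable (fun s => p s ω) := by
    intro ω
    by_contra h
    have := hp_sum ω
    rw [tsum_eq_zero_of_not_summable h] at this
    norm_num at this
  have key : ∀ ω, ∑' s, ENNReal.ofReal (p s ω) = 1 := by
    intro ω
    rw [← ENNReal.ofReal_tsum_of_nonneg (fun s => hp_nonneg s ω) (hsum ω), hp_sum ω,
      ENNReal.ofReal_one]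
  -- the real-valued function
  set g : Ω → ℝ := fun ω => ∑' s', p s' ω * Set.indicator A 1 (s', ω) with hg_def
  have hind_nonneg : ∀ (s : S) (ω : Ω), 0 ≤ p s ω * Set.indicator A 1 (s, ω) := by
    intro s ω
    apply mul_nonneg (hp_nonneg s ω)
    by_cases h : (s, ω) ∈ A <;> simp [Set.indicator, h]
  have hsum_ind : ∀ ω, Summable (fun s => p s ω * Set.indicator A 1 (s, ω)) := by
    intro ω
    apply Summable.of_nonneg_of_le (fun s => hind_nonneg s ω) _ (hsum ω)
    intro s
    by_cases h : (s, ω) ∈ A <;> simp [Set.indicator, h, hp_nonneg s ω]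
  have hG : ∀ ω, ENNReal.ofReal (g ω)
      = ∑' s, ENNReal.ofReal (p s ω * Set.indicator A 1 (s, ω)) := fun ω =>
    ENNReal.ofReal_tsum_of_nonneg (fun s => hind_nonneg s ω) (hsum_ind ω)
  -- ENNReal version of each summand
  have hterm : ∀ (s : S) (ω : Ω), ENNReal.ofReal (p s ω * Set.indicator A 1 (s, ω))
      = Set.indicator {ω' | (s, ω') ∈ A} (fun ω' => ENNReal.ofReal (p s ω')) ω := by
    intro s ω
    by_cases h : (s, ω) ∈ A <;> simp [Set.indicator, h]
  have hslice : ∀ s : S, MeasurableSet {ω | (s, ω) ∈ A} :=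
    fun s => hA.preimage (measurable_prodMk_left)
  have hterm_meas : ∀ s : S, Measurable
      (fun ω => ENNReal.ofReal (p s ω * Set.indicator A 1 (s, ω))) := by
    intro s
    simp only [hterm]
    exact ((hp_meas s).ennreal_ofReal).indicator (hslice s)
  have hGmeas : Measurable (fun ω => ENNReal.ofReal (g ω)) := by
    simp only [hG]
    exact Measurable.ennreal_tsum hterm_meas
  have hg_nonneg : ∀ ω, 0 ≤ g ω := fun ω => tsum_nonneg (fun s => hind_nonneg s ω)
  have hg_meas : Measurable g := by
    have : g = fun ω => (ENNReal.ofReal (g ω)).toReal := by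
      ext ω; rw [ENNReal.toReal_ofReal (hg_nonneg ω)]
    rw [this]
    exact hGmeas.ennreal_toReal
  constructor
  · -- measurability wrt comap
    have hsnd : Measurable[MeasurableSpace.comap (Prod.snd : S × Ω → Ω) mΩ]
        (Prod.snd : S × Ω → Ω) := measurable_iff_comap_le.mpr le_rfl
    exact hg_meas.comp hsnd
  · -- integral identity
    intro F hF
    -- the auxiliary measure ν
    set μs : S → Measure Ω := fun s => P.withDensity (fun ω => ENNReal.ofReal (p s ω)) with hμs
    set ν : Measure (S × Ω) := Measure.sum (fun s => (μs s).map (fun ω => (s, ω))) with hν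
    have hι : ∀ s : S, Measurable (fun ω => ((s, ω) : S × Ω)) := fun s => measurable_prodMk_left
    have hνrect : ∀ (s : S) (F' : Set Ω), MeasurableSet F' →
        ν ({s} ×ˢ F') = ∫⁻ ω in F', ENNReal.ofReal (p s ω) ∂P := by
      intro s F' hF'
      have hmr : MeasurableSet ({s} ×ˢ F' : Set (S × Ω)) :=
        (measurableSet_singleton s).prod hF'
      rw [hν, Measure.sum_apply _ hmr]
      have h1 : ∀ s' : S, ((μs s').map (fun ω => (s', ω))) ({s} ×ˢ F')
          = if s' = s then (μs s) F' else 0 := by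
        intro s'
        rw [Measure.map_apply (hι s') hmr]
        by_cases h : s' = s
        · subst h
          have : (fun ω => ((s', ω) : S × Ω)) ⁻¹' ({s'} ×ˢ F') = F' := by
            ext ω; simp
          rw [this, if_pos rfl]
        · have : (fun ω => ((s', ω) : S × Ω)) ⁻¹' ({s} ×ˢ F') = ∅ := by
            ext ω
            simp only [Set.mem_preimage, Set.mem_prod, Set.mem_singleton_iff,
              Set.mem_empty_iff_false, iff_false, not_and]
            exact fun hs => absurd hs h
          rw [this, if_neg h]
          simp
      simp only [h1]
      rw [tsum_ite_eq]
      rw [hμs]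
      exact withDensity_apply _ hF'
    have hν_univ : ν Set.univ = 1 := by
      have : (Set.univ : Set (S × Ω)) = Set.univ ×ˢ Set.univ := by simp
      rw [hν, Measure.sum_apply _ MeasurableSet.univ]
      have h1 : ∀ s : S, ((μs s).map (fun ω => (s, ω))) Set.univ = (μs s) Set.univ := by
        intro s
        rw [Measure.map_apply (hι s) MeasurableSet.univ]
        simp
      simp only [h1]
      simp only [hμs]
      have h2 : ∀ s : S, (P.withDensity (fun ω => ENNReal.ofReal (p s ω))) Set.univ
          = ∫⁻ ω, ENNReal.ofReal (p s ω) ∂P := by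
        intro s
        rw [withDensity_apply _ MeasurableSet.univ, Measure.restrict_univ]
      simp only [h2]
      rw [← lintegral_tsum (fun s => ((hp_meas s).ennreal_ofReal).aemeasurable)]
      simp only [key]
      simp
    -- π-system
    set C : Set (Set (S × Ω)) :=
      {B | ∃ (s : S) (F' : Set Ω), MeasurableSet F' ∧ B = {s} ×ˢ F'} with hC
    have hpi : IsPiSystem C := by
      rintro B1 ⟨s1, F1, hF1, rfl⟩ B2 ⟨s2, F2, hF2, rfl⟩ hne
      obtain ⟨⟨x1, x2⟩, hx⟩ := hne
      simp only [Set.mem_inter_iff, Set.mem_prod, Set.mem_singleton_iff] at hx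
      have hs : s1 = s2 := by rw [← hx.1.1, ← hx.2.1]
      subst hs
      refine ⟨s1, F1 ∩ F2, hF1.inter hF2, ?_⟩
      ext y
      simp only [Set.mem_inter_iff, Set.mem_prod, Set.mem_singleton_iff]
      tauto
    have hgen : (inferInstance : MeasurableSpace (S × Ω))
        = MeasurableSpace.generateFrom C := by
      apply le_antisymm
      · rw [show (inferInstance : MeasurableSpace (S × Ω))
            = MeasurableSpace.comap Prod.fst inferInstance ⊔
              MeasurableSpace.comap Prod.snd mΩ from rfl]
        apply sup_le
        · rw [← measurable_iff_comap_le]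
          intro B hB
          have : (Prod.fst : S × Ω → S) ⁻¹' B = ⋃ s ∈ B, {s} ×ˢ (Set.univ : Set Ω) := by
            ext y
            simp only [Set.mem_preimage, Set.mem_iUnion, Set.mem_prod,
              Set.mem_singleton_iff, Set.mem_univ, and_true]
            exact ⟨fun h => ⟨y.1, h, rfl⟩, fun ⟨i, hi, h⟩ => h ▸ hi⟩
          rw [this]
          exact MeasurableSet.biUnion (Set.to_countable B)
            (fun s _ => MeasurableSpace.measurableSet_generateFrom
              ⟨s, Set.univ, MeasurableSet.univ, rfl⟩)
        · rw [← measurable_iff_comap_le]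
          intro B hB
          have : (Prod.snd : S × Ω → Ω) ⁻¹' B = ⋃ s : S, {s} ×ˢ B := by
            ext y
            simp only [Set.mem_preimage, Set.mem_iUnion, Set.mem_prod,
              Set.mem_singleton_iff]
            exact ⟨fun h => ⟨y.1, rfl, h⟩, fun ⟨i, _, h⟩ => h⟩
          rw [this]
          exact MeasurableSet.iUnion
            (fun s => MeasurableSpace.measurableSet_generateFrom ⟨s, B, hB, rfl⟩)
      · rw [MeasurableSpace.generateFrom_le_iff]
        rintro B ⟨s, F', hF', rfl⟩
        exact (measurableSet_singleton s).prod hF'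
    have hPdm_eq : Pdm = ν := by
      refine ext_of_generate_finite C hgen hpi ?_ ?_
      · rintro B ⟨s, F', hF', rfl⟩
        rw [hPdm s F' hF', hνrect s F' hF']
      · rw [hν_univ, measure_univ]
    -- now compute both sides over ν
    have hUF : MeasurableSet ((Set.univ : Set S) ×ˢ F) := MeasurableSet.univ.prod hF
    -- LHS
    have hLHS : ∫⁻ x in Set.univ ×ˢ F, ENNReal.ofReal (g x.2) ∂ν
        = ∫⁻ ω in F, ENNReal.ofReal (g ω) ∂P := by
      rw [hν, Measure.restrict_sum _ hUF, lintegral_sum_measure]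
      have h1 : ∀ s : S, ∫⁻ x in Set.univ ×ˢ F, ENNReal.ofReal (g x.2)
          ∂((μs s).map (fun ω => (s, ω)))
          = ∫⁻ ω in F, ENNReal.ofReal (p s ω) * ENNReal.ofReal (g ω) ∂P := by
        intro s
        rw [Measure.restrict_map (hι s) hUF]
        have hpre : (fun ω => ((s, ω) : S × Ω)) ⁻¹' (Set.univ ×ˢ F) = F := by
          ext ω; simp
        rw [hpre, lintegral_map
            (show Measurable fun x : S × Ω => ENNReal.ofReal (g x.2) from
              hGmeas.comp measurable_snd) (hι s), hμs,
          restrict_withDensity hF,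
          lintegral_withDensity_eq_lintegral_mul _ (hp_meas s).ennreal_ofReal hGmeas]
        rfl
      simp only [h1]
      rw [← lintegral_tsum (fun s =>
        (show AEMeasurable (fun ω => ENNReal.ofReal (p s ω) * ENNReal.ofReal (g ω)) (P.restrict F) from
          ((hp_meas s).ennreal_ofReal.mul hGmeas).aemeasurable.restrict))]
      congr 1
      ext ω
      rw [ENNReal.tsum_mul_right, key ω, one_mul]
    -- RHS
    have hRHS : ν (A ∩ Set.univ ×ˢ F) = ∫⁻ ω in F, ENNReal.ofReal (g ω) ∂P := by
      have hm : MeasurableSet (A ∩ Set.univ ×ˢ F) := hA.inter hUF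
      rw [hν, Measure.sum_apply _ hm]
      have h1 : ∀ s : S, ((μs s).map (fun ω => (s, ω))) (A ∩ Set.univ ×ˢ F)
          = ∫⁻ ω in F, Set.indicator {ω' | (s, ω') ∈ A}
              (fun ω' => ENNReal.ofReal (p s ω')) ω ∂P := by
        intro s
        rw [Measure.map_apply (hι s) hm]
        have hpre : (fun ω => ((s, ω) : S × Ω)) ⁻¹' (A ∩ Set.univ ×ˢ F)
            = {ω' | (s, ω') ∈ A} ∩ F := by
          ext ω; simp [Set.mem_inter_iff]
        rw [hpre, hμs, withDensity_apply _ ((hslice s).inter hF)]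
        rw [← lintegral_indicator ((hslice s).inter hF), ← lintegral_indicator hF]
        congr 1
        ext ω
        by_cases h1 : ω ∈ F <;> by_cases h2 : (s, ω) ∈ A <;>
          simp [Set.indicator, h1, h2]
      simp only [h1]
      rw [← lintegral_tsum (fun s =>
        (((hp_meas s).ennreal_ofReal.indicator (hslice s)).aemeasurable.restrict))]
      congr 1
      ext ω
      rw [hG ω]
      congr 1
      ext s
      exact (hterm s ω).symm
    show (∫⁻ x in Set.univ ×ˢ F, ENNReal.ofReal (g x.2) ∂Pdm) = Pdm (A ∩ Set.univ ×ˢ F)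
    calc ∫⁻ x in Set.univ ×ˢ F, ENNReal.ofReal (g x.2) ∂Pdm
        = ∫⁻ x in Set.univ ×ˢ F, ENNReal.ofReal (g x.2) ∂ν := by rw [hPdm_eq]
      _ = ∫⁻ ω in F, ENNReal.ofReal (g ω) ∂P := hLHS
      _ = ν (A ∩ Set.univ ×ˢ F) := hRHS.symm
      _ = Pdm (A ∩ Set.univ ×ˢ F) := by rw [hPdm_eq]
end

section
/- Assume the random variables Y_1, …, Y_N are independent under P and the design does not depend on ω (p(s, ω) = q(s)). If s₀ is a sample with q(s₀) > 0 whose drawn labels s₀(1), …, s₀(n) are pairwise distinct, then the sample variables Y_{i(1)}, …, Y_{i(n)} (where Y_{i(k)}(s, ω) = Y_{s(k)}(ω)) are mutually stochastically independent under the posterior distribution P(· | s₀). -/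
/-!
The posterior given `s₀` assigns to every set `B` the `P`-measure of its slice
`{ω | (s₀, ω) ∈ B}`, so under it the sample variables behave like `Y (s₀ k)` under `P`:
a subfamily of the independent family `Y`, indexed injectively since the labels are distinct.
-/

open MeasureTheory ProbabilityTheory

namespace ProbabilityTheory

variable {Ω Ω' ι : Type*} [MeasurableSpace Ω] [MeasurableSpace Ω'] {β : ι → Type*}
  [∀ i, MeasurableSpace (β i)]

theorem iIndepFun.of_measure_eq_measure_preimage {μ : Measure Ω} {ν : Measure Ω'} {g : Ω' → Ω}
    {f : ∀ i, Ω → β i} (hμ : ∀ B, μ B = ν (g ⁻¹' B))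
    (h : iIndepFun (fun i ↦ f i ∘ g) ν) : iIndepFun f μ := by
  rw [iIndepFun_iff_measure_inter_preimage_eq_mul] at h ⊢
  intro S sets hsets
  simpa only [hμ, Set.preimage_iInter₂, Set.preimage_comp] using h S hsets

theorem cond_prod_singleton_prod_univ_apply {α : Type*} [MeasurableSpace α]
    [MeasurableSingletonClass α] (μ : Measure α) (ν : Measure Ω) [IsProbabilityMeasure ν]
    {a : α} (ha₀ : μ {a} ≠ 0) (ha : μ {a} ≠ ⊤) (B : Set (α × Ω)) :
    (μ.prod ν)[|{a} ×ˢ Set.univ] B = ν (Prod.mk a ⁻¹' B) := by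
  have hslice : {a} ×ˢ Set.univ ∩ B = {a} ×ˢ (Prod.mk a ⁻¹' B) := by
    ext ⟨x, ω⟩
    simp only [Set.mem_inter_iff, Set.mem_prod, Set.mem_singleton_iff, Set.mem_univ, and_true,
      Set.mem_preimage]
    constructor <;> rintro ⟨rfl, h⟩ <;> simp_all
  rw [cond_apply ((measurableSet_singleton a).prod MeasurableSet.univ), hslice,
    Measure.prod_prod, Measure.prod_prod, measure_univ, mul_one, ← mul_assoc,
    ENNReal.inv_mul_cancel ha₀ ha, one_mul]

end ProbabilityTheory

theorem statement9_general
    {Ω : Type*} [MeasurableSpace Ω] (P : Measure Ω) [IsProbabilityMeasure P]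
    (n N : ℕ)
    (Y : Fin N → Ω → ℝ)
    (hYindep : iIndepFun Y P)
    (Q : Measure (Fin n → Fin N)) [IsProbabilityMeasure Q]
    (s₀ : Fin n → Fin N) (hq₀ : 0 < Q {s₀}) (hs₀ : Function.Injective s₀) :
    iIndepFun
      (fun (k : Fin n) (x : (Fin n → Fin N) × Ω) => Y (x.1 k) x.2)
      ((Q.prod P)[|{s₀} ×ˢ Set.univ]) :=
  iIndepFun.of_measure_eq_measure_preimage
    (cond_prod_singleton_prod_univ_apply Q P hq₀.ne' (measure_ne_top Q _))
    (hYindep.precomp hs₀)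

/-- If `Y_1, …, Y_N` are independent under `P` and the design does not
depend on `ω` (mass function `q`, joint measure `P_{d,m} = q ⊗ P`), and `s₀` is a sample
with `q(s₀) > 0` whose drawn labels are pairwise distinct, then the sample variables
`Y_{i(k)}(s, ω) = Y_{s(k)}(ω)`, `k = 1, …, n`, are mutually stochastically independent under
the posterior distribution `P(· | s₀)`. -/
theorem statement9
    {Ω : Type*} [MeasurableSpace Ω] (P : Measure Ω) [IsProbabilityMeasure P]
    (n N : ℕ) (hn : 1 ≤ n) (hnN : n ≤ N)
    (Y : Fin N → Ω → ℝ) (hYmeas : ∀ i, Measurable (Y i))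
    (hYindep : iIndepFun Y P)
    (Q : Measure (Fin n → Fin N)) [IsProbabilityMeasure Q]
    (s₀ : Fin n → Fin N) (hq₀ : 0 < Q {s₀}) (hs₀ : Function.Injective s₀) :
    iIndepFun
      (fun (k : Fin n) (x : (Fin n → Fin N) × Ω) => Y (x.1 k) x.2)
      ((Q.prod P)[|{s₀} ×ˢ Set.univ]) :=
  statement9_general P n N Y hYindep Q s₀ hq₀ hs₀
end

section
/- Assume the random variables Y_1, …, Y_N are independent under P and the design does not depend on ω (p(s, ω) = q(s)). If s₀ is a sample with q(s₀) > 0 having a repeated label, say s₀(k) = s₀(ℓ) = i for some draws k ≠ ℓ, and Y_i is not P-almost surely constant, then the sample variables Y_{i(k)} and Y_{i(ℓ)} are NOT stochastically independent under the posterior distribution P(· | s₀). -/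
/-!
Given the sample `s₀`, the posterior is `δ_{s₀} ⊗ P`, the image of `P` under `ω ↦ (s₀, ω)`.
Pulled back along this map, both sample variables become `Y_{s₀(k)} = Y_{s₀(ℓ)}`, so their
independence would make `Y_{s₀(k)}` independent of itself. The law of such a variable takes only
the values 0 and 1, hence is a Dirac measure on the standard Borel space `ℝ`, i.e. the variable is
almost surely constant.
-/

open MeasureTheory ProbabilityTheory

namespace ProbabilityTheory

variable {Ω β : Type*} {mΩ : MeasurableSpace Ω} {mβ : MeasurableSpace β} {μ : Measure Ω}

lemma IndepFun.exists_ae_eq_const_of_self [IsProbabilityMeasure μ] [StandardBorelSpace β]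
    {X : Ω → β} (hX : Measurable X) (h : IndepFun X X μ) : ∃ c, ∀ᵐ ω ∂μ, X ω = c := by
  have : IsZeroOneMeasure (μ.map X) := ⟨fun B hB => by
    rw [Measure.map_apply hX hB]
    exact measure_eq_zero_or_one_of_indepSet_self
      ((indepFun_iff_indepSet_preimage hX hX).1 h B B hB hB)⟩
  have : IsProbabilityMeasure (μ.map X) := Measure.isProbabilityMeasure_map hX.aemeasurable
  obtain ⟨c, hc⟩ := IsZeroOneMeasure.exists_eq_dirac (μ := μ.map X)
  refine ⟨c, ae_of_ae_map (p := (· = c)) hX.aemeasurable ?_⟩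
  rw [hc]
  exact (ae_dirac_iff (measurableSet_singleton c)).2 rfl

lemma IndepFun.comp_of_map {γ δ : Type*} {mγ : MeasurableSpace γ} {mδ : MeasurableSpace δ}
    {φ : Ω → β} {f : β → γ} {g : β → δ} (hφ : Measurable φ) (hf : Measurable f)
    (hg : Measurable g) (h : IndepFun f g (μ.map φ)) : IndepFun (f ∘ φ) (g ∘ φ) μ := by
  rw [indepFun_iff_measure_inter_preimage_eq_mul] at h ⊢
  intro s t hs ht
  have := h s t hs ht
  rwa [Measure.map_apply hφ ((hf hs).inter (hg ht)), Measure.map_apply hφ (hf hs),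
    Measure.map_apply hφ (hg ht)] at this

lemma cond_prod_univ (μ : Measure Ω) (ν : Measure β) [SFinite μ] [IsProbabilityMeasure ν]
    (s : Set Ω) : (μ.prod ν)[|s ×ˢ Set.univ] = μ[|s].prod ν := by
  rw [ProbabilityTheory.cond, ProbabilityTheory.cond, Measure.prod_smul_left, Measure.prod_prod,
    measure_univ, mul_one, ← Measure.prod_restrict, Measure.restrict_univ]

lemma cond_singleton_eq_dirac [MeasurableSingletonClass Ω] [IsFiniteMeasure μ] {a : Ω}
    (ha : μ {a} ≠ 0) : μ[|{a}] = Measure.dirac a := by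
  ext s hs
  rw [cond_apply (measurableSet_singleton a), Measure.dirac_apply' a hs]
  by_cases has : a ∈ s
  · rw [Set.singleton_inter_of_mem has, Set.indicator_of_mem has,
      ENNReal.inv_mul_cancel ha (measure_ne_top μ _)]; rfl
  · rw [Set.singleton_inter_of_notMem has, Set.indicator_of_notMem has, measure_empty,
      mul_zero]

end ProbabilityTheory

theorem statement10_general
    {Ω : Type*} [MeasurableSpace Ω] (P : Measure Ω) [IsProbabilityMeasure P]
    (n N : ℕ)
    (Y : Fin N → Ω → ℝ) (hYmeas : ∀ i, Measurable (Y i))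
    (Q : Measure (Fin n → Fin N)) [IsProbabilityMeasure Q]
    (s₀ : Fin n → Fin N) (hq₀ : 0 < Q {s₀})
    (k l : Fin n) (hrep : s₀ k = s₀ l)
    (hnc : ¬ ∃ c : ℝ, ∀ᵐ ω ∂P, Y (s₀ k) ω = c) :
    ¬ IndepFun (fun x : (Fin n → Fin N) × Ω => Y (x.1 k) x.2)
        (fun x : (Fin n → Fin N) × Ω => Y (x.1 l) x.2)
        ((Q.prod P)[|{s₀} ×ˢ Set.univ]) := by
  intro hind
  have hsample (j : Fin n) : Measurable fun x : (Fin n → Fin N) × Ω => Y (x.1 j) x.2 :=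
    measurable_from_prod_countable_right fun s => hYmeas (s j)
  rw [cond_prod_univ Q P {s₀}, cond_singleton_eq_dirac hq₀.ne',
    Measure.dirac_prod] at hind
  have hself : IndepFun (Y (s₀ k)) (Y (s₀ l)) P :=
    hind.comp_of_map (φ := Prod.mk s₀) measurable_prodMk_left (hsample k) (hsample l)
  rw [← hrep] at hself
  exact hnc (hself.exists_ae_eq_const_of_self (hYmeas _))

/-- If `Y_1, …, Y_N` are independent under `P`, the design has constant
mass function `q` (`P_{d,m} = q ⊗ P`), and `s₀` is a sample with `q(s₀) > 0` having a
repeated label `s₀(k) = s₀(ℓ)` for draws `k ≠ ℓ`, with `Y_{s₀(k)}` not `P`-a.s. constant,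
then the sample variables `Y_{i(k)}` and `Y_{i(ℓ)}` are NOT stochastically independent under
the posterior distribution `P(· | s₀)`. -/
theorem statement10
    {Ω : Type*} [MeasurableSpace Ω] (P : Measure Ω) [IsProbabilityMeasure P]
    (n N : ℕ) (hn : 2 ≤ n) (hN : 1 ≤ N)
    (Y : Fin N → Ω → ℝ) (hYmeas : ∀ i, Measurable (Y i))
    (hYindep : iIndepFun Y P)
    (Q : Measure (Fin n → Fin N)) [IsProbabilityMeasure Q]
    (s₀ : Fin n → Fin N) (hq₀ : 0 < Q {s₀})
    (k l : Fin n) (hkl : k ≠ l) (hrep : s₀ k = s₀ l)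
    (hnc : ¬ ∃ c : ℝ, ∀ᵐ ω ∂P, Y (s₀ k) ω = c) :
    ¬ IndepFun (fun x : (Fin n → Fin N) × Ω => Y (x.1 k) x.2)
        (fun x : (Fin n → Fin N) × Ω => Y (x.1 l) x.2)
        ((Q.prod P)[|{s₀} ×ˢ Set.univ]) :=
  statement10_general P n N Y hYmeas Q s₀ hq₀ k l hrep hnc
end

section
/- If Y_1, …, Y_N are i.i.d. under P, then under the SRSWOR design the sample variables Y_{i(1)}, …, Y_{i(n)}, defined by Y_{i(k)}(s, ω) = Y_{s(k)}(ω), are mutually stochastically independent under the joint measure P_{d,m}, and each Y_{i(k)} has the common law of Y_1. -/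
/-!
Conditionally on the drawn sample `s`, the sample variables are `Y_{s(1)}, …, Y_{s(n)}`; when
`s` is injective these are distinct members of an i.i.d. family, so their joint law is the
`n`-fold product of the common law `ν` of `Y_1`. Since the design charges only injective samples,
the joint law of the sample variables under `Q ⊗ P` is a mixture of copies of `ν^⊗n`, hence
`ν^⊗n` itself, which says both that they are independent and that each has law `ν`.
-/

open MeasureTheory ProbabilityTheory

lemma MeasureTheory.Measure.map_prod_uncurry_eq_of_ae_map_eq
    {α Ω γ : Type*} [MeasurableSpace α] [Countable α] [MeasurableSingletonClass α]
    [MeasurableSpace Ω] [MeasurableSpace γ]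
    (Q : Measure α) [IsProbabilityMeasure Q] (P : Measure Ω) [SFinite P]
    {F : α → Ω → γ} (hF : ∀ a, Measurable (F a)) {ν : Measure γ}
    (h : ∀ᵐ a ∂Q, P.map (F a) = ν) :
    (Q.prod P).map (Function.uncurry F) = ν := by
  have hmeas : Measurable (Function.uncurry F) := measurable_from_prod_countable_right hF
  ext A hA
  rw [Measure.map_apply hmeas hA, Measure.prod_apply (hmeas hA)]
  calc ∫⁻ a, P (F a ⁻¹' A) ∂Q = ∫⁻ _, ν A ∂Q := by
        refine lintegral_congr_ae (h.mono fun a ha => ?_)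
        change P (F a ⁻¹' A) = ν A
        rw [← Measure.map_apply (hF a) hA, ha]
    _ = ν A := by simp

lemma ProbabilityTheory.iIndepFun.map_fun_comp_eq_pi
    {Ω ι κ β : Type*} [MeasurableSpace Ω] [MeasurableSpace β] [Fintype ι]
    {P : Measure Ω} [IsProbabilityMeasure P] {Y : κ → Ω → β} (hY : ∀ j, Measurable (Y j))
    (hindep : iIndepFun Y P) {ν : Measure β} (hident : ∀ j, P.map (Y j) = ν)
    {s : ι → κ} (hs : Function.Injective s) :
    P.map (fun ω k => Y (s k) ω) = Measure.pi (fun _ : ι => ν) := by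
  rw [(hindep.precomp hs).map_fun_eq_pi_map fun k => (hY (s k)).aemeasurable]
  simp only [hident]

lemma ProbabilityTheory.iIndepFun_and_map_eq_of_map_fun_eq_pi
    {Ω ι β : Type*} [MeasurableSpace Ω] [MeasurableSpace β] [Fintype ι]
    {μ : Measure Ω} [IsProbabilityMeasure μ]
    {Z : ι → Ω → β} (hZ : ∀ i, Measurable (Z i))
    {ν : Measure β} [IsProbabilityMeasure ν]
    (h : μ.map (fun ω i => Z i ω) = Measure.pi (fun _ : ι => ν)) :
    iIndepFun Z μ ∧ ∀ i, μ.map (Z i) = ν := by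
  have hlaw : ∀ i, μ.map (Z i) = ν := fun i => by
    rw [← (measurePreserving_eval (fun _ : ι => ν) i).map_eq, ← h,
      Measure.map_map (measurable_pi_apply i) (measurable_pi_lambda _ hZ)]
    rfl
  refine ⟨?_, hlaw⟩
  rw [iIndepFun_iff_map_fun_eq_pi_map fun i => (hZ i).aemeasurable, h]
  simp only [hlaw]

/-- If `Y_1, …, Y_N` are i.i.d. under `P`, then under the SRSWOR design
(each injective sample of size `n` gets probability `(N−n)!/N!`, joint measure
`P_{d,m} = Q ⊗ P`) the sample variables `Y_{i(k)}(s, ω) = Y_{s(k)}(ω)`, `k = 1, …, n`, are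
mutually stochastically independent under `P_{d,m}`, and each has the common law of `Y_1`. -/
theorem statement13
    {Ω : Type*} [MeasurableSpace Ω] (P : Measure Ω) [IsProbabilityMeasure P]
    (n N : ℕ) (hn : 1 ≤ n) (hnN : n ≤ N)
    (Y : Fin N → Ω → ℝ) (hYmeas : ∀ i, Measurable (Y i))
    (hYindep : iIndepFun Y P)
    (hYident : ∀ i, P.map (Y i) = P.map (Y ⟨0, by omega⟩))
    (Q : Measure (Fin n → Fin N)) [IsProbabilityMeasure Q]
    (hQ0 : ∀ s, ¬ Function.Injective s → Q {s} = 0) :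
    iIndepFun
      (fun (k : Fin n) (x : (Fin n → Fin N) × Ω) => Y (x.1 k) x.2) (Q.prod P) ∧
    ∀ k : Fin n,
      (Q.prod P).map (fun x : (Fin n → Fin N) × Ω => Y (x.1 k) x.2)
        = P.map (Y ⟨0, by omega⟩) := by
  have : IsProbabilityMeasure (P.map (Y ⟨0, by omega⟩)) :=
    Measure.isProbabilityMeasure_map (hYmeas _).aemeasurable
  let F : (Fin n → Fin N) → Ω → Fin n → ℝ := fun s ω k => Y (s k) ω
  have hF : ∀ s, Measurable (F s) := fun s => measurable_pi_lambda _ fun k => hYmeas (s k)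
  have hinjective : ∀ᵐ s ∂Q, Function.Injective s :=
    ae_iff_of_countable.2 fun s => not_imp_comm.1 (hQ0 s)
  have hjoint :
      (Q.prod P).map (Function.uncurry F) = Measure.pi fun _ => P.map (Y ⟨0, by omega⟩) :=
    Measure.map_prod_uncurry_eq_of_ae_map_eq Q P hF <|
      hinjective.mono fun s hs => hYindep.map_fun_comp_eq_pi hYmeas hYident hs
  exact iIndepFun_and_map_eq_of_map_fun_eq_pi (Z := fun k x => Function.uncurry F x k)
    (fun k => (measurable_from_prod_countable_right hF).eval) hjoint
end

section
/- Assume Y_1, …, Y_N are i.i.d. under P with Y_1 not P-almost surely constant, and n ≥ 2. Then under the SRSWR design, for any two draws k ≠ ℓ, the sample variables Y_{i(k)} and Y_{i(ℓ)} are NOT stochastically independent under the joint measure P_{d,m}. -/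
open MeasureTheory Filter ProbabilityTheory

open scoped ENNReal

/-!
Write `Z k (s, ω) = Y (s k) ω` for the `k`-th sample variable and `μ` for the common law of the
`Y i`. Each `Z k` has law `μ`. Given the sample `s`, the draws `k` and `l` either hit the same label,
and then `Z k = Z l`, or two different labels, and then they are independent. Hence, with
`q = Q {s | s k = s l}`,
  `(Q ⊗ P) (Z k ∈ A, Z l ∈ A) = q μ(A) + (1 - q) μ(A)²`.
Since `q ≥ Q {const} > 0`, independence of `Z k` and `Z l` forces `μ(A) = μ(A)²`, so `μ` only takes
the values `0` and `1`, and a real random variable with such a law is a.s. constant.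
-/

theorem ENNReal.eq_zero_or_one_of_mixture_eq_mul_self {a b p : ℝ≥0∞} (hab : a + b = 1)
    (ha : a ≠ 0) (hp : p ≠ ∞) (h : a * p + b * (p * p) = p * p) : p = 0 ∨ p = 1 := by
  have ha' : a ≠ ∞ := ne_top_of_le_ne_top one_ne_top (hab ▸ le_self_add)
  have hb : b ≠ ∞ := ne_top_of_le_ne_top one_ne_top (hab ▸ le_add_self)
  have hmix : a * p + b * (p * p) = a * (p * p) + b * (p * p) := by
    rw [h, ← add_mul, hab, one_mul]
  have hidem : p * 1 = p * p := by
    rw [mul_one]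
    exact (ENNReal.mul_right_inj ha ha').1
      ((ENNReal.add_left_inj (mul_ne_top hb (mul_ne_top hp hp))).1 hmix)
  rcases eq_or_ne p 0 with hp0 | hp0
  · exact .inl hp0
  · exact .inr ((ENNReal.mul_right_inj hp0 hp).1 hidem).symm

theorem exists_ae_eq_const_of_measure_preimage_eq_zero_or_one {Ω β : Type*}
    [MeasurableSpace Ω] [MeasurableSpace β] [MeasurableSpace.CountablySeparated β] [Nonempty β]
    {P : Measure Ω} [IsProbabilityMeasure P] {X : Ω → β} (hX : Measurable X)
    (h : ∀ A, MeasurableSet A → P (X ⁻¹' A) = 0 ∨ P (X ⁻¹' A) = 1) :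
    ∃ c, ∀ᵐ ω ∂P, X ω = c := by
  refine exists_eventuallyEq_const_of_forall_separating MeasurableSet fun A hA => ?_
  rcases h A hA with h0 | h1
  · exact .inr (measure_eq_zero_iff_ae_notMem.1 h0)
  · exact .inl ((mem_ae_iff_prob_eq_one (hX hA)).2 h1)

section SampleVariable

variable {Ω ι κ β : Type*} [MeasurableSpace Ω] [MeasurableSpace ι] [MeasurableSpace β]

def sampleVar (Y : ι → Ω → β) (k : κ) : (κ → ι) × Ω → β := fun x => Y (x.1 k) x.2

variable [Countable ι] [MeasurableSingletonClass ι] {Y : ι → Ω → β}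

theorem measurable_sampleVar (hY : ∀ i, Measurable (Y i)) (k : κ) :
    Measurable (sampleVar Y k) :=
  (measurable_from_prod_countable_right (f := fun p : ι × Ω => Y p.1 p.2) hY).comp
    (f := fun x : (κ → ι) × Ω => (x.1 k, x.2)) (by fun_prop)

theorem measurableSet_apply_eq_apply (k l : κ) : MeasurableSet {s : κ → ι | s k = s l} :=
  measurableSet_eq_fun (measurable_pi_apply k) (measurable_pi_apply l)

variable {P : Measure Ω} [SFinite P] {μ : Measure β}

theorem prod_apply_preimage_sampleVar (Q : Measure (κ → ι)) [IsProbabilityMeasure Q]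
    (hY : ∀ i, Measurable (Y i)) (hlaw : ∀ i, P.map (Y i) = μ) (k : κ) {A : Set β}
    (hA : MeasurableSet A) : (Q.prod P) (sampleVar Y k ⁻¹' A) = μ A := by
  have hslice (s : κ → ι) : P (Prod.mk s ⁻¹' (sampleVar Y k ⁻¹' A)) = μ A := by
    rw [← hlaw (s k), Measure.map_apply (hY _) hA]
    rfl
  simp [Measure.prod_apply (measurable_sampleVar hY k hA), hslice]

theorem prod_apply_inter_preimage_sampleVar (Q : Measure (κ → ι))
    (hY : ∀ i, Measurable (Y i)) (hindep : iIndepFun Y P) (hlaw : ∀ i, P.map (Y i) = μ)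
    (k l : κ) {A B : Set β} (hA : MeasurableSet A) (hB : MeasurableSet B) :
    (Q.prod P) (sampleVar Y k ⁻¹' A ∩ sampleVar Y l ⁻¹' B) =
      Q {s | s k = s l} * μ (A ∩ B) + Q {s | s k = s l}ᶜ * (μ A * μ B) := by
  have hlaw' (i : ι) {C : Set β} (hC : MeasurableSet C) : P (Y i ⁻¹' C) = μ C := by
    rw [← hlaw i, Measure.map_apply (hY i) hC]
  set slice := fun s => P (Prod.mk s ⁻¹' (sampleVar Y k ⁻¹' A ∩ sampleVar Y l ⁻¹' B))
  have hslice (s : κ → ι) : slice s = P (Y (s k) ⁻¹' A ∩ Y (s l) ⁻¹' B) := rfl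
  have hsame : Set.EqOn slice (fun _ => μ (A ∩ B)) {s | s k = s l} :=
    fun s (hs : s k = s l) => by
      rw [hslice, hs, ← Set.preimage_inter, hlaw' _ (hA.inter hB)]
  have hdistinct : Set.EqOn slice (fun _ => μ A * μ B) {s | s k = s l}ᶜ :=
    fun s (hs : s k ≠ s l) => by
      rw [hslice, (hindep.indepFun hs).measure_inter_preimage_eq_mul _ _ hA hB, hlaw' _ hA,
        hlaw' _ hB]
  have hD := measurableSet_apply_eq_apply (ι := ι) k l
  rw [Measure.prod_apply ((measurable_sampleVar hY k hA).inter (measurable_sampleVar hY l hB)),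
    ← lintegral_add_compl _ hD, setLIntegral_congr_fun hD hsame,
    setLIntegral_congr_fun hD.compl hdistinct, setLIntegral_const, setLIntegral_const,
    mul_comm, mul_comm (μ A * μ B)]

end SampleVariable

/-- If `Y_1, …, Y_N` are i.i.d. under `P` with `Y_1` not `P`-a.s. constant
and `n ≥ 2`, then under the SRSWR design (joint measure `P_{d,m} = Q ⊗ P` with
`Q {s} = N^{−n}` for every `s`), for any two draws `k ≠ ℓ` the sample variables `Y_{i(k)}`
and `Y_{i(ℓ)}` are NOT stochastically independent under `P_{d,m}`. -/
theorem statement16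
    {Ω : Type*} [MeasurableSpace Ω] (P : Measure Ω) [IsProbabilityMeasure P]
    (n N : ℕ) (hN : 1 ≤ N)
    (Y : Fin N → Ω → ℝ) (hYmeas : ∀ i, Measurable (Y i))
    (hYindep : iIndepFun Y P)
    (hYident : ∀ i, P.map (Y i) = P.map (Y ⟨0, by omega⟩))
    (hYnc : ¬ ∃ c : ℝ, ∀ᵐ ω ∂P, Y ⟨0, by omega⟩ ω = c)
    (Q : Measure (Fin n → Fin N)) [IsProbabilityMeasure Q]
    (hQ : ∀ s : Fin n → Fin N, Q {s} = ((N : ENNReal) ^ n)⁻¹) :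
    ∀ (k l : Fin n), k ≠ l →
      ¬ IndepFun (fun x : (Fin n → Fin N) × Ω => Y (x.1 k) x.2)
          (fun x : (Fin n → Fin N) × Ω => Y (x.1 l) x.2) (Q.prod P) := by
  intro k l _ hindep
  change IndepFun (sampleVar Y k) (sampleVar Y l) (Q.prod P) at hindep
  set i₀ : Fin N := ⟨0, by omega⟩
  have hconst : (fun _ => i₀) ∈ {s : Fin n → Fin N | s k = s l} := rfl
  have hsame : Q {s | s k = s l} ≠ 0 := by
    refine ne_bot_of_le_ne_bot ?_ (measure_mono (Set.singleton_subset_iff.2 hconst))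
    rw [hQ]
    exact ENNReal.inv_ne_zero.2 (ENNReal.pow_ne_top (ENNReal.natCast_ne_top N))
  refine hYnc (exists_ae_eq_const_of_measure_preimage_eq_zero_or_one (hYmeas i₀) fun A hA => ?_)
  have hsplit := hindep.measure_inter_preimage_eq_mul A A hA hA
  rw [prod_apply_inter_preimage_sampleVar Q hYmeas hYindep hYident k l hA hA,
    prod_apply_preimage_sampleVar Q hYmeas hYident k hA,
    prod_apply_preimage_sampleVar Q hYmeas hYident l hA, Set.inter_self] at hsplit
  rw [← Measure.map_apply (hYmeas i₀) hA]
  exact ENNReal.eq_zero_or_one_of_mixture_eq_mul_self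
    (prob_add_prob_compl (measurableSet_apply_eq_apply k l)) hsame (measure_ne_top _ _) hsplit
end

section
/- (Deterministic core of Proposition 3.1.) Let L ≥ 1 and, for each stratum h = 1, …, L, let N_h ≥ 1, let Y_{h1}, …, Y_{hN_h} be real numbers and M_{h1}, …, M_{hN_h} positive integers (so M_{hi} ≥ 1). Set M_h = Σ_{i} M_{hi}, M = Σ_h M_h, W_h = M_h/M, N = Σ_h N_h, Ȳ_h = (Σ_i Y_{hi})/M_h, and for δ > 0 let E_d|θ̂_h − Ȳ_h|^{2+δ} := Σ_{i=1}^{N_h} |Y_{hi}/M_{hi} − Ȳ_h|^{2+δ}·(M_{hi}/M_h) denote the (2+δ)-th absolute central moment of a single PPS draw in stratum h (value Y_{hi}/M_{hi} with probability M_{hi}/M_h). Then Σ_{h=1}^L W_h · E_d|θ̂_h − Ȳ_h|^{2+δ} ≤ 2^{2+δ} · (1/N) · Σ_{h=1}^L Σ_{i=1}^{N_h} |Y_{hi}|^{2+δ}. -/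
open Finset

/-- Two-point power mean inequality for real exponents. -/
lemma aux_two_rpow (a b : ℝ) (ha : 0 ≤ a) (hb : 0 ≤ b) {p : ℝ} (hp : 1 ≤ p) :
    (a + b) ^ p ≤ 2 ^ (p - 1) * (a ^ p + b ^ p) := by
  have h := NNReal.rpow_add_le_mul_rpow_add_rpow a.toNNReal b.toNNReal hp
  have := NNReal.coe_le_coe.mpr h
  push_cast [NNReal.coe_rpow, Real.coe_toNNReal _ ha, Real.coe_toNNReal _ hb] at this
  simpa using this

/-- **deterministic core of Proposition 3.1.** For strata `h = 1, …, L` with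
cluster totals `Y_{hi}` and positive integer sizes `M_{hi}`, letting `M_h = Σ_i M_{hi}`,
`M = Σ_h M_h`, `W_h = M_h/M`, `N = Σ_h N_h`, `Ȳ_h = (Σ_i Y_{hi})/M_h`, the `(2+δ)`-th
absolute central moment of a single PPS draw in each stratum (value `Y_{hi}/M_{hi}` with
probability `M_{hi}/M_h`) satisfies
`Σ_h W_h · Σ_i |Y_{hi}/M_{hi} − Ȳ_h|^{2+δ}·(M_{hi}/M_h)
   ≤ 2^{2+δ} · (1/N) · Σ_h Σ_i |Y_{hi}|^{2+δ}`. -/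
theorem statement17
    (L : ℕ) (hL : 1 ≤ L)
    (Nh : Fin L → ℕ) (hNh : ∀ h, 1 ≤ Nh h)
    (Y : ∀ h : Fin L, Fin (Nh h) → ℝ)
    (M : ∀ h : Fin L, Fin (Nh h) → ℕ) (hM : ∀ h i, 1 ≤ M h i)
    (δ : ℝ) (hδ : 0 < δ) :
    ∑ h : Fin L,
        ((∑ i, (M h i : ℝ)) / (∑ h' : Fin L, ∑ i, (M h' i : ℝ))) *
          ∑ i, |Y h i / (M h i : ℝ) - (∑ i', Y h i') / (∑ i', (M h i' : ℝ))| ^ ((2:ℝ) + δ)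
            * ((M h i : ℝ) / (∑ i', (M h i' : ℝ)))
      ≤ (2:ℝ) ^ ((2:ℝ) + δ) * ((∑ h : Fin L, (Nh h : ℝ))⁻¹) *
          ∑ h : Fin L, ∑ i, |Y h i| ^ ((2:ℝ) + δ) := by
  have hp1 : (1:ℝ) ≤ 2 + δ := by linarith
  have hp0 : (0:ℝ) ≤ 2 + δ := by linarith
  set p : ℝ := 2 + δ with hpdef
  have hMh_ge : ∀ h : Fin L, (Nh h : ℝ) ≤ ∑ i, (M h i : ℝ) := by
    intro h
    calc (Nh h : ℝ) = ∑ _i : Fin (Nh h), (1:ℝ) := by simp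
      _ ≤ ∑ i, (M h i : ℝ) := Finset.sum_le_sum fun i _ => by exact_mod_cast hM h i
  have hMh_pos : ∀ h : Fin L, (0:ℝ) < ∑ i, (M h i : ℝ) := fun h =>
    lt_of_lt_of_le (by exact_mod_cast hNh h) (hMh_ge h)
  have hNt_pos : (0:ℝ) < ∑ h : Fin L, (Nh h : ℝ) := by
    haveI : Nonempty (Fin L) := Fin.pos_iff_nonempty.mp hL
    exact Finset.sum_pos (fun h _ => by exact_mod_cast hNh h) univ_nonempty
  have hNtMt : (∑ h : Fin L, (Nh h : ℝ)) ≤ ∑ h' : Fin L, ∑ i, (M h' i : ℝ) :=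
    Finset.sum_le_sum fun h _ => hMh_ge h
  have hMt_pos : (0:ℝ) < ∑ h' : Fin L, ∑ i, (M h' i : ℝ) := lt_of_lt_of_le hNt_pos hNtMt
  have key : ∀ h : Fin L,
      ((∑ i, (M h i : ℝ)) / (∑ h' : Fin L, ∑ i, (M h' i : ℝ))) *
          ∑ i, |Y h i / (M h i : ℝ) - (∑ i', Y h i') / (∑ i', (M h i' : ℝ))| ^ p
            * ((M h i : ℝ) / (∑ i', (M h i' : ℝ)))
        ≤ (2:ℝ) ^ p * ((∑ h : Fin L, (Nh h : ℝ))⁻¹) * ∑ i, |Y h i| ^ p := by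
    intro h
    have hS : (0:ℝ) < ∑ i', (M h i' : ℝ) := hMh_pos h
    set S : ℝ := ∑ i', (M h i' : ℝ) with hSdef
    set w : Fin (Nh h) → ℝ := fun i => (M h i : ℝ) / S with hw
    have hw_nonneg : ∀ i, 0 ≤ w i := fun i => div_nonneg (by positivity) hS.le
    have hw_sum : ∑ i, w i = 1 := by
      rw [hw, ← Finset.sum_div]
      exact div_self hS.ne'
    set a : Fin (Nh h) → ℝ := fun i => Y h i / (M h i : ℝ) with ha
    set b : ℝ := (∑ i', Y h i') / S with hb
    have hMi_one : ∀ i, (1:ℝ) ≤ (M h i : ℝ) := fun i => by exact_mod_cast hM h i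
    have hMi_pos : ∀ i, (0:ℝ) < (M h i : ℝ) := fun i => lt_of_lt_of_le one_pos (hMi_one i)
    -- b is the weighted average of the a i
    have hb_avg : b = ∑ i, w i * a i := by
      rw [hb, hw, ha]
      rw [Finset.sum_div]
      refine Finset.sum_congr rfl fun i _ => ?_
      rw [div_mul_div_comm, mul_comm ((M h i : ℝ)) (Y h i),
        mul_div_mul_right _ _ (hMi_pos i).ne']
    -- Jensen: |b|^p ≤ ∑ w i * |a i|^p
    have jensen : |b| ^ p ≤ ∑ i, w i * |a i| ^ p := by
      have h1 : |b| ≤ ∑ i, w i * |a i| := by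
        rw [hb_avg]
        refine (Finset.abs_sum_le_sum_abs _ _).trans (le_of_eq ?_)
        refine Finset.sum_congr rfl fun i _ => ?_
        rw [abs_mul, abs_of_nonneg (hw_nonneg i)]
      calc |b| ^ p ≤ (∑ i, w i * |a i|) ^ p :=
            Real.rpow_le_rpow (abs_nonneg _) h1 hp0
        _ ≤ ∑ i, w i * |a i| ^ p :=
            Real.rpow_arith_mean_le_arith_mean_rpow univ w (fun i => |a i|)
              (fun i _ => hw_nonneg i) hw_sum (fun i _ => abs_nonneg _) hp1
    -- per-term bound via the two-point inequality
    have step1 : ∑ i, |a i - b| ^ p * w i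
        ≤ (2:ℝ) ^ (p - 1) * ((∑ i, w i * |a i| ^ p) + |b| ^ p) := by
      have hterm : ∀ i, |a i - b| ^ p * w i
          ≤ (2:ℝ) ^ (p - 1) * (|a i| ^ p + |b| ^ p) * w i := by
        intro i
        refine mul_le_mul_of_nonneg_right ?_ (hw_nonneg i)
        calc |a i - b| ^ p ≤ (|a i| + |b|) ^ p :=
              Real.rpow_le_rpow (abs_nonneg _) (abs_sub _ _) hp0
          _ ≤ (2:ℝ) ^ (p - 1) * (|a i| ^ p + |b| ^ p) :=
              aux_two_rpow _ _ (abs_nonneg _) (abs_nonneg _) hp1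
      calc ∑ i, |a i - b| ^ p * w i
          ≤ ∑ i, (2:ℝ) ^ (p - 1) * (|a i| ^ p + |b| ^ p) * w i :=
            Finset.sum_le_sum fun i _ => hterm i
        _ = ∑ i, ((2:ℝ) ^ (p - 1) * (w i * |a i| ^ p) + (2:ℝ) ^ (p - 1) * |b| ^ p * w i) :=
            Finset.sum_congr rfl fun i _ => by ring
        _ = (2:ℝ) ^ (p - 1) * (∑ i, w i * |a i| ^ p) + (2:ℝ) ^ (p - 1) * |b| ^ p * ∑ i, w i := by
            rw [Finset.sum_add_distrib, ← Finset.mul_sum, ← Finset.mul_sum]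
        _ = (2:ℝ) ^ (p - 1) * ((∑ i, w i * |a i| ^ p) + |b| ^ p) := by
            rw [hw_sum]; ring
    have step2 : ∑ i, |a i - b| ^ p * w i ≤ (2:ℝ) ^ p * ∑ i, w i * |a i| ^ p := by
      have h2 : (2:ℝ) ^ (p - 1) * (2 * ∑ i, w i * |a i| ^ p)
          = (2:ℝ) ^ p * ∑ i, w i * |a i| ^ p := by
        have e : (2:ℝ) ^ (p - 1) = 2 ^ p / 2 := by
          rw [Real.rpow_sub (by norm_num : (0:ℝ) < 2), Real.rpow_one]
        rw [e]; ring
      calc ∑ i, |a i - b| ^ p * w i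
          ≤ (2:ℝ) ^ (p - 1) * ((∑ i, w i * |a i| ^ p) + |b| ^ p) := step1
        _ ≤ (2:ℝ) ^ (p - 1) * (2 * ∑ i, w i * |a i| ^ p) := by
            have h2p : (0:ℝ) ≤ (2:ℝ) ^ (p - 1) := Real.rpow_nonneg (by norm_num) _
            refine mul_le_mul_of_nonneg_left ?_ h2p
            have := jensen
            linarith
        _ = (2:ℝ) ^ p * ∑ i, w i * |a i| ^ p := h2
    -- bound weighted powers by raw powers
    have step3 : ∑ i, w i * |a i| ^ p ≤ (∑ i, |Y h i| ^ p) / S := by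
      rw [Finset.sum_div]
      refine Finset.sum_le_sum fun i _ => ?_
      have hMi := hMi_pos i
      have e1 : |a i| ^ p = |Y h i| ^ p / (M h i : ℝ) ^ p := by
        rw [ha]
        rw [abs_div, abs_of_pos hMi, Real.div_rpow (abs_nonneg _) hMi.le]
      rw [e1, hw]
      have hMle : (M h i : ℝ) ≤ (M h i : ℝ) ^ p := by
        nth_rewrite 1 [← Real.rpow_one (M h i : ℝ)]
        exact Real.rpow_le_rpow_of_exponent_le (hMi_one i) hp1
      have hMp_pos : (0:ℝ) < (M h i : ℝ) ^ p := Real.rpow_pos_of_pos hMi _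
      calc (M h i : ℝ) / S * (|Y h i| ^ p / (M h i : ℝ) ^ p)
          = |Y h i| ^ p * (M h i : ℝ) / ((M h i : ℝ) ^ p * S) := by ring
        _ ≤ |Y h i| ^ p * (M h i : ℝ) ^ p / ((M h i : ℝ) ^ p * S) := by
            gcongr
        _ = |Y h i| ^ p / S := by
            rw [mul_comm ((M h i : ℝ) ^ p) S, mul_div_mul_right _ _ hMp_pos.ne']
    -- combine
    have hsum_eq : ∑ i, |Y h i / (M h i : ℝ) - (∑ i', Y h i') / (∑ i', (M h i' : ℝ))| ^ p
            * ((M h i : ℝ) / (∑ i', (M h i' : ℝ)))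
        = ∑ i, |a i - b| ^ p * w i := rfl
    rw [hsum_eq]
    have hT : 0 ≤ ∑ i, |Y h i| ^ p :=
      Finset.sum_nonneg fun i _ => Real.rpow_nonneg (abs_nonneg _) _
    have h2p : (0:ℝ) ≤ (2:ℝ) ^ p := Real.rpow_nonneg (by norm_num) _
    calc (S / (∑ h' : Fin L, ∑ i, (M h' i : ℝ))) * ∑ i, |a i - b| ^ p * w i
        ≤ (S / (∑ h' : Fin L, ∑ i, (M h' i : ℝ))) * ((2:ℝ) ^ p * ((∑ i, |Y h i| ^ p) / S)) := by
          refine mul_le_mul_of_nonneg_left ?_ (div_nonneg hS.le hMt_pos.le)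
          exact step2.trans (mul_le_mul_of_nonneg_left step3 h2p)
      _ = (2:ℝ) ^ p * ((∑ i, |Y h i| ^ p) / (∑ h' : Fin L, ∑ i, (M h' i : ℝ))) := by
          field_simp
      _ ≤ (2:ℝ) ^ p * ((∑ i, |Y h i| ^ p) / (∑ h : Fin L, (Nh h : ℝ))) := by
          gcongr
      _ = (2:ℝ) ^ p * ((∑ h : Fin L, (Nh h : ℝ))⁻¹) * ∑ i, |Y h i| ^ p := by
          rw [div_eq_inv_mul]; ring
  calc ∑ h : Fin L,
        ((∑ i, (M h i : ℝ)) / (∑ h' : Fin L, ∑ i, (M h' i : ℝ))) *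
          ∑ i, |Y h i / (M h i : ℝ) - (∑ i', Y h i') / (∑ i', (M h i' : ℝ))| ^ p
            * ((M h i : ℝ) / (∑ i', (M h i' : ℝ)))
      ≤ ∑ h : Fin L, (2:ℝ) ^ p * ((∑ h : Fin L, (Nh h : ℝ))⁻¹) * ∑ i, |Y h i| ^ p :=
        Finset.sum_le_sum fun h _ => key h
    _ = (2:ℝ) ^ p * ((∑ h : Fin L, (Nh h : ℝ))⁻¹) * ∑ h : Fin L, ∑ i, |Y h i| ^ p := by
        rw [← Finset.mul_sum]
end
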